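/- Let I ⊆ ℝ be an open interval and let R : I → ℝ^{p×p} be a differentiable map such that R(t) is symmetric positive definite for every t ∈ I. Define S(t) = R(t)^{-1/2}, the inverse of the unique symmetric positive definite square root of R(t). Then S is differentiable on I, S(t) is symmetric for every t, and for every t ∈ I the derivative satisfies S'(t) S(t) + S(t) S'(t) = −R(t)^{-1} R'(t) R(t)^{-1}. -/

import Mathlib

/-!
Squaring `X ↦ X * X` has derivative `H ↦ A * H + H * A` at a positive definite `A`, which is
injective: if `A * H = -(H * A)` then `H` commutes with `A * A`, hence with its square root `A`,
so `A * H = 0`. By the inverse function theorem squaring has a differentiable local inverse `g`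
near `A * A`. For symmetric `Y` near `A * A`, `(g Y)ᵀ` is another square root of `Y` close to `A`,
so it equals `g Y`; a symmetric matrix close to `A` is positive definite, so `g Y` is the
positive square root of `Y`. Hence `S = g ∘ R⁻¹` near `t`, and differentiating `S * S = R⁻¹`
gives the Sylvester equation.
-/

open Matrix Filter Topology

attribute [local instance] Matrix.linftyOpNormedRing Matrix.linftyOpNormedAlgebra

section Calculus

variable {n : Type*} [Fintype n] [DecidableEq n] {f : ℝ → Matrix n n ℝ} {f' : Matrix n n ℝ}
  {t : ℝ}

theorem hasDerivAt_matrix_iff :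
    HasDerivAt f f' t ↔ ∀ i j, HasDerivAt (fun s => f s i j) (f' i j) t := by
  let e : (n → n → ℝ) ≃L[ℝ] Matrix n n ℝ := (ofLinearEquiv ℝ).toContinuousLinearEquiv
  refine ⟨fun hf i j => ?_, fun hf => ?_⟩
  · exact hasDerivAt_pi.1 (hasDerivAt_pi.1 (e.symm.hasFDerivAt.comp_hasDerivAt t hf) i) j
  · exact e.hasFDerivAt.comp_hasDerivAt (f := (f : ℝ → n → n → ℝ)) t
      (hasDerivAt_pi.2 fun i => hasDerivAt_pi.2 (hf i))

theorem HasDerivAt.matrix_transpose (hf : HasDerivAt f f' t) :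
    HasDerivAt (fun s => (f s)ᵀ) f'ᵀ t :=
  hasDerivAt_matrix_iff.2 fun i j => hasDerivAt_matrix_iff.1 hf j i

theorem HasDerivAt.transpose_eq_self (hf : HasDerivAt f f' t)
    (hsymm : ∀ᶠ s in 𝓝 t, (f s)ᵀ = f s) : f'ᵀ = f' :=
  (hf.matrix_transpose.congr_of_eventuallyEq (hsymm.mono fun _ h => h.symm)).unique hf

theorem HasDerivAt.matrix_inv (hf : HasDerivAt f f' t) (hunit : IsUnit (f t)) :
    HasDerivAt (fun s => (f s)⁻¹) (-((f t)⁻¹ * f' * (f t)⁻¹)) t := by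
  obtain ⟨u, hu⟩ := hunit
  have hinv := hasFDerivAt_ringInverse (𝕜 := ℝ) u
  rw [hu] at hinv
  have hcomp := hinv.comp_hasDerivAt t hf
  simp only [Function.comp_def, ← nonsing_inv_eq_ringInverse] at hcomp
  have hu_inv : (↑u⁻¹ : Matrix n n ℝ) = (f t)⁻¹ := by
    rw [nonsing_inv_eq_ringInverse, ← hu, Ring.inverse_unit]
  refine hcomp.congr_deriv ?_
  simp only [hu_inv, _root_.neg_apply, ContinuousLinearMap.mulLeftRight_apply]

end Calculus

namespace Matrix

variable {n : Type*} [Fintype n]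

theorem PosDef.eventually_posDef {A : Matrix n n ℝ} (hA : A.PosDef) :
    ∀ᶠ B in 𝓝 A, B.IsHermitian → B.PosDef := by
  have hcont : Continuous fun p : Matrix n n ℝ × (n → ℝ) => p.2 ⬝ᵥ p.1 *ᵥ p.2 :=
    continuous_snd.dotProduct (continuous_fst.matrix_mulVec continuous_snd)
  have hsphere :
      ∀ᶠ B in 𝓝 A, ∀ x ∈ Metric.sphere (0 : n → ℝ) 1, 0 < x ⬝ᵥ B *ᵥ x := by
    refine (isCompact_sphere 0 1).eventually_forall_of_forall_eventually fun x hx => ?_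
    have hx0 : x ≠ 0 := ne_zero_of_mem_unit_sphere ⟨x, hx⟩
    exact hcont.continuousAt.eventually
      (lt_mem_nhds (by simpa using hA.dotProduct_mulVec_pos hx0))
  filter_upwards [hsphere] with B hB hBherm
  refine .of_dotProduct_mulVec_pos hBherm fun x hx => ?_
  have hxn : 0 < ‖x‖ := norm_pos_iff.2 hx
  have hpos := hB (‖x‖⁻¹ • x) (by simp [norm_smul, hxn.ne'])
  simp only [mulVec_smul, dotProduct_smul, smul_dotProduct, smul_eq_mul] at hpos
  simpa using pos_of_mul_pos_right (pos_of_mul_pos_right hpos (by positivity)) (by positivity)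

variable [DecidableEq n]

open scoped MatrixOrder in
theorem PosSemidef.eq_of_mul_self_eq_mul_self {A B : Matrix n n ℝ} (hA : A.PosSemidef)
    (hB : B.PosSemidef) (h : A * A = B * B) : A = B :=
  (CFC.sq_eq_sq_iff A B hA.nonneg hB.nonneg).1 (by rw [sq, sq, h])

open scoped MatrixOrder in
theorem PosDef.eq_zero_of_mul_add_mul_eq_zero {A H : Matrix n n ℝ} (hA : A.PosDef)
    (h : A * H + H * A = 0) : H = 0 := by
  have hanti : A * H = -(H * A) := eq_neg_of_add_eq_zero_left h
  have hsq : Commute (A * A) H := show A * A * H = H * (A * A) by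
    calc A * A * H = A * (A * H) := mul_assoc ..
      _ = H * (A * A) := by rw [hanti, mul_neg, ← mul_assoc, hanti, neg_mul, neg_neg, mul_assoc]
  have hcomm : Commute A H := by
    simpa only [← CFC.sqrt.eq_1, CFC.sqrt_mul_self A hA.posSemidef.nonneg] using
      hsq.cfcₙ_nnreal NNReal.sqrt
  have htwo : (2 : ℝ) • (A * H) = 0 := by rw [two_smul]; nth_rw 2 [hcomm.eq]; exact h
  exact hA.isUnit.mul_right_eq_zero.1 ((smul_eq_zero.1 htwo).resolve_left two_ne_zero)

theorem PosDef.exists_differentiableAt_sqrt {A : Matrix n n ℝ} (hA : A.PosDef) :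
    ∃ g : Matrix n n ℝ → Matrix n n ℝ, DifferentiableAt ℝ g (A * A) ∧
      ∀ᶠ Y in 𝓝 (A * A), Y.IsHermitian → (g Y).PosDef ∧ g Y * g Y = Y := by
  have hsq := (hasStrictFDerivAt_id (𝕜 := ℝ) A).mul' (hasStrictFDerivAt_id A)
  set L := A • ContinuousLinearMap.id ℝ (Matrix n n ℝ) +
    (ContinuousLinearMap.id ℝ _).smulRight A
  have hinj : Function.Injective L :=
    (injective_iff_map_eq_zero L).2 fun H hH => hA.eq_zero_of_mul_add_mul_eq_zero hH
  let e : Matrix n n ℝ ≃L[ℝ] Matrix n n ℝ :=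
    (LinearEquiv.ofInjectiveEndo (L : Matrix n n ℝ →ₗ[ℝ] Matrix n n ℝ)
      hinj).toContinuousLinearEquiv
  have hΦ : HasStrictFDerivAt (fun X : Matrix n n ℝ => X * X)
      (e : Matrix n n ℝ →L[ℝ] Matrix n n ℝ) A := hsq
  set g := hΦ.localInverse _ _ _
  refine ⟨g, hΦ.to_localInverse.differentiableAt, ?_⟩
  have hg : Tendsto g (𝓝 (A * A)) (𝓝 A) := hΦ.localInverse_tendsto
  have htr : Tendsto (fun X : Matrix n n ℝ => Xᵀ) (𝓝 A) (𝓝 A) := by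
    simpa [(isHermitian_iff_isSymm.1 hA.1).eq] using continuous_id.matrix_transpose.tendsto A
  filter_upwards [hΦ.eventually_right_inverse,
    hg.eventually (htr.eventually hΦ.eventually_left_inverse),
    hg.eventually hA.eventually_posDef] with Y hright hleft hpos hY
  refine ⟨hpos (isHermitian_iff_isSymm.2 ?_), hright⟩
  calc (g Y)ᵀ = g ((g Y)ᵀ * (g Y)ᵀ) := hleft.symm
    _ = g Y := by rw [← transpose_mul, hright, (isHermitian_iff_isSymm.1 hY).eq]

end Matrix

theorem deriv_inv_sqrt_sylvester_general {p : ℕ} (I : Set ℝ) (hIopen : IsOpen I)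
    (R R' S : ℝ → Matrix (Fin p) (Fin p) ℝ)
    (hRderiv : ∀ t ∈ I, ∀ i j, HasDerivAt (fun s => R s i j) (R' t i j) t)
    (hRpos : ∀ t ∈ I, (R t).PosDef)
    (hSpos : ∀ t ∈ I, (S t).PosDef)
    (hSsq : ∀ t ∈ I, S t * S t = (R t)⁻¹) :
    ∀ t ∈ I, (S t)ᵀ = S t ∧
      ∃ S' : Matrix (Fin p) (Fin p) ℝ,
        (∀ i j, HasDerivAt (fun s => S s i j) (S' i j) t) ∧
        S'ᵀ = S' ∧
        S' * S t + S t * S' = -((R t)⁻¹ * R' t * (R t)⁻¹) := by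
  have hSsymm : ∀ s ∈ I, (S s)ᵀ = S s := fun s hs =>
    (isHermitian_iff_isSymm.1 (hSpos s hs).1).eq
  intro t ht
  have hI : ∀ᶠ s in 𝓝 t, s ∈ I := hIopen.mem_nhds ht
  have hRinv : HasDerivAt (fun s => (R s)⁻¹) (-((R t)⁻¹ * R' t * (R t)⁻¹)) t :=
    (hasDerivAt_matrix_iff.2 (hRderiv t ht)).matrix_inv (hRpos t ht).isUnit
  obtain ⟨g, hg, hg_sqrt⟩ := (hSpos t ht).exists_differentiableAt_sqrt
  rw [hSsq t ht] at hg hg_sqrt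
  have hS_eq : S =ᶠ[𝓝 t] fun s => g (R s)⁻¹ := by
    filter_upwards [hI, hRinv.continuousAt.eventually hg_sqrt] with s hs hgs
    obtain ⟨hpos, hsq⟩ := hgs (hRpos s hs).1.inv
    exact (hSpos s hs).posSemidef.eq_of_mul_self_eq_mul_self hpos.posSemidef
      (by rw [hSsq s hs, hsq])
  obtain ⟨S', hS'⟩ : ∃ S', HasDerivAt S S' t :=
    ⟨_, (hg.comp t hRinv.differentiableAt).hasDerivAt.congr_of_eventuallyEq hS_eq⟩
  refine ⟨hSsymm t ht, S', hasDerivAt_matrix_iff.1 hS',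
    hS'.transpose_eq_self (hI.mono hSsymm), ?_⟩
  exact (hS'.mul hS').unique (hRinv.congr_of_eventuallyEq (hI.mono hSsq))

/-- Let `I ⊆ ℝ` be an open interval and `R : I → ℝ^{p×p}` a differentiable map (with
derivative `R'`, expressed entrywise) such that `R t` is symmetric positive definite for
every `t ∈ I`. Let `S t = R(t)^{-1/2}` (characterized as the unique symmetric positive
definite matrix with `S t * S t = (R t)⁻¹`). Then `S` is differentiable on `I`, `S t` is
symmetric, and its derivative `S'` is the symmetric solution of the Sylvester equation
`S' S + S S' = −R⁻¹ R' R⁻¹`. -/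
theorem deriv_inv_sqrt_sylvester {p : ℕ} (I : Set ℝ) (hIopen : IsOpen I)
    (hIinterval : I.OrdConnected)
    (R R' S : ℝ → Matrix (Fin p) (Fin p) ℝ)
    (hRderiv : ∀ t ∈ I, ∀ i j, HasDerivAt (fun s => R s i j) (R' t i j) t)
    (hRpos : ∀ t ∈ I, (R t).PosDef)
    (hSpos : ∀ t ∈ I, (S t).PosDef)
    (hSsq : ∀ t ∈ I, S t * S t = (R t)⁻¹) :
    ∀ t ∈ I, (S t)ᵀ = S t ∧
      ∃ S' : Matrix (Fin p) (Fin p) ℝ,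
        (∀ i j, HasDerivAt (fun s => S s i j) (S' i j) t) ∧
        S'ᵀ = S' ∧
        S' * S t + S t * S' = -((R t)⁻¹ * R' t * (R t)⁻¹) :=
  deriv_inv_sqrt_sylvester_general I hIopen R R' S hRderiv hRpos hSpos hSsq
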